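/- arXiv:1409.8637 — 3 statements merged into one kernel-verified Lean document; each statement's English description precedes it below -/
import Mathlib

section
/- Let (M, A) be a d-dimensional BUT-manifold. Suppose {B_i, B_{-i}}, i = 1, ..., d+1, with B_{-i} := A(B_i), is a family of closed sets covering M such that B_i ∩ B_{-i} = ∅ for all i. Then for every choice of indices k_1, ..., k_{d+1} with |k_i| = i, the intersection B_{k_1} ∩ B_{k_2} ∩ ... ∩ B_{k_{d+1}} is nonempty. -/
open Set Metric Geometry

noncomputable section

abbrev Euc (n : ℕ) : Type := EuclideanSpace ℝ (Fin n)

def IsFreeInvolutionOn {E : Type} [TopologicalSpace E] (A : E → E) (M : Set E) : Prop :=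
  Set.MapsTo A M M ∧ ContinuousOn A M ∧ (∀ x ∈ M, A (A x) = x) ∧ (∀ x ∈ M, A x ≠ x)

/-- `M` is a closed (compact, connected, boundaryless) topological `d`-manifold. -/
def IsClosedManifoldOfDim {E : Type} [TopologicalSpace E] (d : ℕ) (M : Set E) : Prop :=
  IsCompact M ∧ IsConnected M ∧ Nonempty (ChartedSpace (Euc d) ↥M)

/-- A BUT (Borsuk--Ulam type) manifold: a closed `d`-manifold with a free involution
such that every continuous map to `ℝ^d` identifies some orbit. -/
def IsBUTManifold {E : Type} [TopologicalSpace E] (d : ℕ) (M : Set E) (A : E → E) : Prop :=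
  IsClosedManifoldOfDim d M ∧ IsFreeInvolutionOn A M ∧
    ∀ g : E → Euc d, ContinuousOn g M → ∃ x ∈ M, g (A x) = g x

/-!
By perfect normality, each `B i` is the zero set of a continuous `u i ≥ 0`. The ratio
`t i x = (u i (A x) - u i x) / (u i (A x) + u i x)` is continuous on `M` (the denominator only
vanishes where `x` and `A x` both lie in `B i`), odd under `A`, and equals `1` exactly on `B i`
and `-1` exactly on `A '' B i`; after replacing `t i` by `-t i` where `A '' B i` is chosen, it is
`1` exactly on the chosen set. The Borsuk–Ulam property applied to the differences `t i - t d`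
gives a point `x` where all `t i x` agree. Since the sets cover `M`, one `t j x` is `±1`, so
either `x` or `A x` lies in every chosen set.
-/

section OddSeparator

variable {X : Type*} {A : X → X}

def oddRatio (A : X → X) (u : X → ℝ) (x : X) : ℝ :=
  (u (A x) - u x) / (u (A x) + u x)

theorem oddRatio_apply_eq_neg (u : X → ℝ) {x : X} (hx : A (A x) = x) :
    oddRatio A u (A x) = -oddRatio A u x := by
  rw [oddRatio, oddRatio, hx, ← neg_div, neg_sub, add_comm]

theorem oddRatio_eq_one_iff {u : X → ℝ} (hu : ∀ x, 0 ≤ u x) {x : X} :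
    oddRatio A u x = 1 ↔ u x = 0 ∧ u (A x) ≠ 0 := by
  by_cases hden : u (A x) + u x = 0
  · have hx0 : u x = 0 := by linarith [hu x, hu (A x)]
    have hAx : u (A x) = 0 := by linarith
    simp [oddRatio, hx0, hAx]
  · rw [oddRatio, div_eq_one_iff_eq hden]
    constructor
    · intro h
      refine ⟨by linarith, fun hAx => hden ?_⟩
      linarith
    · rintro ⟨hx, -⟩
      rw [hx, sub_zero, add_zero]

variable [TopologicalSpace X] {M : Set X}

theorem continuousOn_oddRatio {u : X → ℝ} (hu : Continuous u) (hA : ContinuousOn A M)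
    (hden : ∀ x ∈ M, u (A x) + u x ≠ 0) : ContinuousOn (oddRatio A u) M :=
  ((hu.comp_continuousOn hA).sub hu.continuousOn).div
    ((hu.comp_continuousOn hA).add hu.continuousOn) hden

structure IsOddSeparator (A : X → X) (M : Set X) (t : X → ℝ) (C D : Set X) : Prop where
  continuousOn : ContinuousOn t M
  apply_eq_neg : ∀ x ∈ M, t (A x) = -t x
  eq_one_iff : ∀ x ∈ M, t x = 1 ↔ x ∈ C
  eq_neg_one_iff : ∀ x ∈ M, t x = -1 ↔ x ∈ D

theorem IsOddSeparator.neg {t : X → ℝ} {C D : Set X} (h : IsOddSeparator A M t C D) :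
    IsOddSeparator A M (-t) D C where
  continuousOn := h.continuousOn.neg
  apply_eq_neg x hx := by simp [h.apply_eq_neg x hx]
  eq_one_iff x hx := by rw [Pi.neg_apply, neg_eq_iff_eq_neg, h.eq_neg_one_iff x hx]
  eq_neg_one_iff x hx := by rw [Pi.neg_apply, neg_inj, h.eq_one_iff x hx]

theorem IsOddSeparator.eq_one_or_eq_neg_one {t : X → ℝ} {C D : Set X}
    (h : IsOddSeparator A M t C D) {x : X} (hxM : x ∈ M) (hx : x ∈ C ∪ D) :
    t x = 1 ∨ t x = -1 := by
  rw [h.eq_one_iff x hxM, h.eq_neg_one_iff x hxM]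
  exact hx

theorem exists_isOddSeparator [PerfectlyNormalSpace X] (hA : ContinuousOn A M)
    (hinv : ∀ x ∈ M, A (A x) = x) (hmaps : MapsTo A M M) {B : Set X} (hB : IsClosed B)
    (hBM : B ⊆ M) (hdisj : B ∩ A '' B = ∅) : ∃ t, IsOddSeparator A M t B (A '' B) := by
  obtain ⟨u, hBu, hu⟩ := perfectlyNormalSpace_iff_forall_isClosed_preimage_zero.1 ‹_› B hB
  have hu0 : ∀ x, 0 ≤ u x := fun x => (hu x).1
  have hmem : ∀ x, x ∈ B ↔ u x = 0 := fun x => by rw [hBu]; rfl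
  have hmem_image : ∀ x ∈ M, x ∈ A '' B ↔ A x ∈ B := by
    refine fun x hx => ⟨?_, fun h => ⟨A x, h, hinv x hx⟩⟩
    rintro ⟨b, hb, rfl⟩
    rwa [hinv b (hBM hb)]
  have hfree : ∀ x ∈ M, x ∈ B → A x ∉ B := fun x hx hxB hAxB =>
    (eq_empty_iff_forall_notMem.1 hdisj) x ⟨hxB, (hmem_image x hx).2 hAxB⟩
  have hone : ∀ x ∈ M, oddRatio A u x = 1 ↔ x ∈ B := fun x hx => by
    rw [oddRatio_eq_one_iff hu0, ← hmem, Ne, ← hmem (A x)]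
    exact ⟨And.left, fun hxB => ⟨hxB, hfree x hx hxB⟩⟩
  refine ⟨oddRatio A u, ?_, fun x hx => oddRatio_apply_eq_neg u (hinv x hx), hone, ?_⟩
  · refine continuousOn_oddRatio u.continuous hA fun x hx hden => ?_
    have hAx : u (A x) = 0 := by linarith [hu0 x, hu0 (A x)]
    exact hfree x hx ((hmem x).2 (by linarith)) ((hmem (A x)).2 hAx)
  · intro x hx
    rw [hmem_image x hx, ← hone (A x) (hmaps hx), oddRatio_apply_eq_neg u (hinv x hx),
      neg_eq_iff_eq_neg]

end OddSeparator

theorem exists_forall_eq_of_odd {E : Type*} [TopologicalSpace E] {d : ℕ} {M : Set E}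
    {A : E → E} (hBU : ∀ g : E → Euc d, ContinuousOn g M → ∃ x ∈ M, g (A x) = g x)
    (s : Fin (d + 1) → E → ℝ) (hs : ∀ i, ContinuousOn (s i) M)
    (hodd : ∀ i, ∀ x ∈ M, s i (A x) = -s i x) : ∃ x ∈ M, ∀ i j, s i x = s j x := by
  let g : E → Euc d := fun x => WithLp.toLp 2 fun i : Fin d => s i.castSucc x - s (Fin.last d) x
  have hg : ContinuousOn g M :=
    (PiLp.continuous_toLp 2 _).comp_continuousOn
      (continuousOn_pi.2 fun i => (hs _).sub (hs _))
  obtain ⟨x, hxM, hx⟩ := hBU g hg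
  have hlast : ∀ i, s i x = s (Fin.last d) x := by
    refine Fin.lastCases rfl fun i => ?_
    have hi := congrArg (fun v : Euc d => v i) hx
    simp only [g, hodd _ x hxM] at hi
    linarith
  exact ⟨x, hxM, fun i j => (hlast i).trans (hlast j).symm⟩

theorem ite_union_ite_swap {α : Type*} (b : Bool) (P Q : Set α) :
    ((if b then P else Q) ∪ if b then Q else P) = P ∪ Q := by
  cases b <;> simp [union_comm]

/-- **Tucker's first covering theorem for BUT-manifolds.** Let `(M, A)` be a
`d`-dimensional BUT-manifold covered by closed sets `B 0, …, B d` together with their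
images `A '' B i`, with `B i ∩ A '' B i = ∅`. Then for every choice of one set from
each pair `{B i, A '' B i}`, the chosen sets have a common point. -/
theorem covering_theorem_one (d N : ℕ) (M : Set (Euc N)) (A : Euc N → Euc N)
    (hBUT : IsBUTManifold d M A)
    (B : Fin (d + 1) → Set (Euc N))
    (hclosed : ∀ i, IsClosed (B i)) (hsub : ∀ i, B i ⊆ M)
    (hdisj : ∀ i, B i ∩ A '' B i = ∅)
    (hcover : M ⊆ ⋃ i, (B i ∪ A '' B i)) :
    ∀ ε : Fin (d + 1) → Bool,
      (⋂ i, if ε i then B i else A '' B i).Nonempty := by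
  intro ε
  obtain ⟨-, ⟨hmaps, hA, hinv, -⟩, hBU⟩ := hBUT
  have hsep : ∀ i, ∃ t, IsOddSeparator A M t (if ε i then B i else A '' B i)
      (if ε i then A '' B i else B i) := fun i => by
    obtain ⟨t, ht⟩ := exists_isOddSeparator hA hinv hmaps (hclosed i) (hsub i) (hdisj i)
    cases ε i
    exacts [⟨-t, ht.neg⟩, ⟨t, ht⟩]
  choose t ht using hsep
  obtain ⟨x, hxM, hx⟩ := exists_forall_eq_of_odd hBU t (fun i => (ht i).continuousOn)
    fun i => (ht i).apply_eq_neg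
  obtain ⟨j, hj⟩ := mem_iUnion.1 (hcover hxM)
  rcases (ht j).eq_one_or_eq_neg_one hxM ((ite_union_ite_swap _ _ _).symm ▸ hj) with h | h
  · exact ⟨x, mem_iInter.2 fun i => ((ht i).eq_one_iff x hxM).1 ((hx i j).trans h)⟩
  · refine ⟨A x, mem_iInter.2 fun i => ((ht i).eq_one_iff (A x) (hmaps hxM)).1 ?_⟩
    rw [(ht i).apply_eq_neg x hxM, hx i j, h, neg_neg]
end
end

section
/- Let (M, A) be a d-dimensional BUT-manifold covered by d+2 closed subsets C_1, ..., C_{d+2}, each satisfying C_i ∩ A(C_i) = ∅. Then for every 0 < k < d+2 and every k of these subsets, there exists x ∈ M lying in the intersection of those k subsets with A(x) lying in the intersection of the remaining d+2-k subsets. -/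
open Set Metric Geometry

noncomputable section

/-!
Separate each `C i` from its antipode by the odd function
`w i x = (d(x, C i) - d(A x, C i)) / (d(x, C i) + d(A x, C i))`, which is `-1` exactly on `C i`
and `1` exactly on `A⁻¹ (C i)`. Pick `i₀ ∈ s` and `j₀ ∉ s`; the `d` odd functions `w i - w i₀`
(`i ∈ s`, `i ≠ i₀`) and `w j - w j₀` (`j ∉ s`, `j ≠ j₀`) have a common zero `x` by the BUT
property. At `x` the values of `w` are constant on `s` and on its complement, and since `x` and
`A x` lie in some members of the cover, these two constants are `-1` and `1` in some order.
Accordingly `x` or `A x` is the required point.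
-/

section OddFunctions

variable {E : Type*} [TopologicalSpace E] {M : Set E} {A : E → E} {d : ℕ}

theorem exists_forall_eq_zero_of_odd
    (hbut : ∀ g : E → Euc d, ContinuousOn g M → ∃ x ∈ M, g (A x) = g x)
    {ι : Type*} [Fintype ι] (hι : Fintype.card ι = d) (f : ι → E → ℝ)
    (hcont : ∀ i, ContinuousOn (f i) M) (hodd : ∀ i, ∀ x ∈ M, f i (A x) = -f i x) :
    ∃ x ∈ M, ∀ i, f i x = 0 := by
  let e := Fintype.equivFinOfCardEq hι
  let g : E → Euc d := fun x => WithLp.toLp 2 fun r => f (e.symm r) x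
  have hg : ContinuousOn g M :=
    (PiLp.continuous_toLp 2 _).comp_continuousOn (continuousOn_pi.mpr fun r => hcont _)
  obtain ⟨x, hx, hgx⟩ := hbut g hg
  refine ⟨x, hx, fun i => ?_⟩
  have hi : f i (A x) = f i x := by
    simpa [g] using congrArg (fun v : Euc d => v (e i)) hgx
  linarith [hodd i x hx]

theorem exists_const_on_and_const_on_compl
    (hbut : ∀ g : E → Euc d, ContinuousOn g M → ∃ x ∈ M, g (A x) = g x)
    {ι : Type*} [Fintype ι] [DecidableEq ι] (hι : Fintype.card ι = d + 2) {w : ι → E → ℝ}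
    (hcont : ∀ i, ContinuousOn (w i) M) (hodd : ∀ i, ∀ x ∈ M, w i (A x) = -w i x)
    {s : Finset ι} (hs : s.Nonempty) (hsc : sᶜ.Nonempty) :
    ∃ x ∈ M, ∃ a b : ℝ, (∀ i ∈ s, w i x = a) ∧ ∀ i ∉ s, w i x = b := by
  obtain ⟨i₀, hi₀⟩ := hs
  obtain ⟨j₀, hj₀⟩ := hsc
  have hj₀ : j₀ ∉ s := Finset.mem_compl.mp hj₀
  let base : ι → ι := fun i => if i ∈ s then i₀ else j₀
  let u : Finset ι := {i₀, j₀}ᶜ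
  have hu : Fintype.card u = d := by
    rw [Fintype.card_coe, Finset.card_compl, Finset.card_pair (by rintro rfl; exact hj₀ hi₀), hι]
    rfl
  obtain ⟨x, hx, hzero⟩ := exists_forall_eq_zero_of_odd hbut hu
    (fun i => w i - w (base i)) (fun i => (hcont i).sub (hcont _))
    (fun i y hy => by simp only [Pi.sub_apply, hodd _ y hy]; ring)
  have hbase : ∀ i, w i x = w (base i) x := by
    intro i
    by_cases hiu : i ∈ u
    · exact sub_eq_zero.mp (hzero ⟨i, hiu⟩)
    · obtain rfl | rfl : i = i₀ ∨ i = j₀ := by simpa [u, or_iff_not_imp_left] using hiu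
      · simp [base, hi₀]
      · simp [base, hj₀]
  exact ⟨x, hx, w i₀ x, w j₀ x, fun i hi => by simpa [base, hi] using hbase i,
    fun i hi => by simpa [base, hi] using hbase i⟩

end OddFunctions

theorem eq_and_eq_or_eq_and_eq_of_piecewise_const {ι α : Type*} {v : ι → α} {s : ι → Prop}
    {a b p q : α} (ha : ∀ i, s i → v i = a) (hb : ∀ i, ¬s i → v i = b) (hpq : p ≠ q)
    {m m' : ι} (hm : v m = p) (hm' : v m' = q) :
    (a = p ∧ b = q) ∨ (a = q ∧ b = p) := by
  by_cases hms : s m <;> by_cases hm's : s m'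
  · exact absurd (hm.symm.trans ((ha m hms).trans ((ha m' hm's).symm.trans hm'))) hpq
  · exact Or.inl ⟨(ha m hms).symm.trans hm, (hb m' hm's).symm.trans hm'⟩
  · exact Or.inr ⟨(ha m' hm's).symm.trans hm', (hb m hms).symm.trans hm⟩
  · exact absurd (hm.symm.trans ((hb m hms).trans ((hb m' hm's).symm.trans hm'))) hpq

section OddDistRatio

variable {E : Type*} [PseudoMetricSpace E]

/-- This is `0 / 0 = 0` everywhere when `C = ∅`. -/
def oddDistRatio (A : E → E) (C : Set E) (x : E) : ℝ :=
  (infDist x C - infDist (A x) C) / (infDist x C + infDist (A x) C)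

variable {A : E → E} {C : Set E}

theorem oddDistRatio_apply_eq_neg {x : E} (hx : A (A x) = x) :
    oddDistRatio A C (A x) = -oddDistRatio A C x := by
  simp only [oddDistRatio, hx]
  ring

theorem infDist_add_infDist_pos (hC : IsClosed C) (hAC : MapsTo A C Cᶜ) (hne : C.Nonempty)
    (x : E) : 0 < infDist x C + infDist (A x) C := by
  by_cases hx : x ∈ C
  · exact add_pos_of_nonneg_of_pos infDist_nonneg ((hC.notMem_iff_infDist_pos hne).mp (hAC hx))
  · exact add_pos_of_pos_of_nonneg ((hC.notMem_iff_infDist_pos hne).mp hx) infDist_nonneg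

theorem continuousOn_oddDistRatio {M : Set E} (hA : ContinuousOn A M) (hC : IsClosed C)
    (hAC : MapsTo A C Cᶜ) : ContinuousOn (oddDistRatio A C) M := by
  rcases C.eq_empty_or_nonempty with rfl | hne
  · exact (continuousOn_const (c := (0 : ℝ))).congr fun x _ => by simp [oddDistRatio]
  have hdist : ContinuousOn (fun x => infDist (A x) C) M :=
    (continuous_infDist_pt C).comp_continuousOn hA
  exact ((continuous_infDist_pt C).continuousOn.sub hdist).div
    ((continuous_infDist_pt C).continuousOn.add hdist)
    fun x _ => (infDist_add_infDist_pos hC hAC hne x).ne'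

theorem oddDistRatio_eq_neg_one_iff (hC : IsClosed C) (hAC : MapsTo A C Cᶜ) {x : E} :
    oddDistRatio A C x = -1 ↔ x ∈ C := by
  rcases C.eq_empty_or_nonempty with rfl | hne
  · simp [oddDistRatio]
  have hpos := infDist_add_infDist_pos hC hAC hne x
  rw [oddDistRatio, div_eq_iff hpos.ne', hC.mem_iff_infDist_zero hne]
  constructor
  · intro h
    linarith
  · intro h
    rw [h]
    ring

theorem oddDistRatio_eq_one_iff (hC : IsClosed C) (hAC : MapsTo A C Cᶜ) {x : E}
    (hx : A (A x) = x) : oddDistRatio A C x = 1 ↔ A x ∈ C := by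
  rw [← oddDistRatio_eq_neg_one_iff hC hAC, oddDistRatio_apply_eq_neg hx, neg_inj]

end OddDistRatio

theorem covering_theorem_two_general (d N : ℕ) (M : Set (Euc N)) (A : Euc N → Euc N)
    (hBUT : IsBUTManifold d M A)
    (C : Fin (d + 2) → Set (Euc N))
    (hclosed : ∀ i, IsClosed (C i))
    (hcover : M ⊆ ⋃ i, C i)
    (hdisj : ∀ i, C i ∩ A '' C i = ∅) :
    ∀ s : Finset (Fin (d + 2)), 0 < s.card → s.card < d + 2 →
      ∃ x ∈ M, (∀ i ∈ s, x ∈ C i) ∧ ∀ i ∉ s, A x ∈ C i := by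
  intro s hpos hlt
  obtain ⟨-, ⟨hmaps, hAcont, hAA, -⟩, hbut⟩ := hBUT
  have hAC : ∀ i, MapsTo A (C i) (C i)ᶜ := fun i y hy hAy =>
    (hdisj i).subset ⟨hAy, y, hy, rfl⟩
  have hsc : sᶜ.Nonempty := by
    rw [← Finset.card_pos, Finset.card_compl, Fintype.card_fin]
    omega
  obtain ⟨x, hx, a, b, ha, hb⟩ := exists_const_on_and_const_on_compl hbut (Fintype.card_fin _)
    (fun i => continuousOn_oddDistRatio hAcont (hclosed i) (hAC i))
    (fun i y hy => oddDistRatio_apply_eq_neg (hAA y hy)) (Finset.card_pos.mp hpos) hsc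
  have hneg (i : Fin (d + 2)) (y : Euc N) : oddDistRatio A (C i) y = -1 ↔ y ∈ C i :=
    oddDistRatio_eq_neg_one_iff (hclosed i) (hAC i)
  have hone (i : Fin (d + 2)) {y : Euc N} (hy : y ∈ M) : oddDistRatio A (C i) y = 1 ↔ A y ∈ C i :=
    oddDistRatio_eq_one_iff (hclosed i) (hAC i) (hAA y hy)
  obtain ⟨m, hm⟩ := mem_iUnion.mp (hcover hx)
  obtain ⟨m', hm'⟩ := mem_iUnion.mp (hcover (hmaps hx))
  rcases eq_and_eq_or_eq_and_eq_of_piecewise_const ha hb (by norm_num : (-1 : ℝ) ≠ 1)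
    ((hneg m x).mpr hm) ((hone m' hx).mpr hm') with ⟨rfl, rfl⟩ | ⟨rfl, rfl⟩
  · exact ⟨x, hx, fun i hi => (hneg i x).mp (ha i hi), fun i hi => (hone i hx).mp (hb i hi)⟩
  · refine ⟨A x, hmaps hx, fun i hi => (hone i hx).mp (ha i hi), fun i hi => ?_⟩
    rw [hAA x hx]
    exact (hneg i x).mp (hb i hi)

/-- **Tucker's second covering theorem for BUT-manifolds.** Let `(M, A)` be a
`d`-dimensional BUT-manifold covered by `d + 2` closed subsets `C i`, each with
`C i ∩ A '' C i = ∅`. Then for every `0 < k < d + 2` and every `k` of the subsets there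
is `x ∈ M` in the intersection of those `k` subsets with `A x` in the intersection of
the remaining `d + 2 - k` subsets. -/
theorem covering_theorem_two (d N : ℕ) (M : Set (Euc N)) (A : Euc N → Euc N)
    (hBUT : IsBUTManifold d M A)
    (C : Fin (d + 2) → Set (Euc N))
    (hclosed : ∀ i, IsClosed (C i)) (hsub : ∀ i, C i ⊆ M)
    (hcover : M ⊆ ⋃ i, C i)
    (hdisj : ∀ i, C i ∩ A '' C i = ∅) :
    ∀ s : Finset (Fin (d + 2)), 0 < s.card → s.card < d + 2 →
      ∃ x ∈ M, (∀ i ∈ s, x ∈ C i) ∧ ∀ i ∉ s, A x ∈ C i :=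
  covering_theorem_two_general d N M A hBUT C hclosed hcover hdisj
end
end

section
/- Let (M, A) be a d-dimensional BUT-manifold. Then M cannot be covered by d+1 closed sets none of which contains a pair of points {x, A(x)}. -/
open Set Metric Geometry

noncomputable section

/-!
Apply the Borsuk–Ulam property to `x ↦ (dist(x, C₀), …, dist(x, C_{d-1})) ∈ ℝ^d`. At a point
`x` with `g (A x) = g x`, the points `x` and `A x` are at the same distance from each of the
closed sets `C₀, …, C_{d-1}`, so they lie in the same ones. Either both lie in one of them,
or neither lies in any, and then both lie in the last set `C_d` of the cover.
-/

theorem IsClosed.mem_iff_mem_of_infDist_eq {α : Type*} [PseudoMetricSpace α] {s : Set α}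
    (hs : IsClosed s) {x y : α} (h : infDist x s = infDist y s) : x ∈ s ↔ y ∈ s := by
  rcases s.eq_empty_or_nonempty with rfl | hne
  · simp
  · rw [hs.mem_iff_infDist_zero hne, hs.mem_iff_infDist_zero hne, h]

theorem mem_last_of_mem_iUnion_of_forall_notMem_castSucc {α : Type*} {d : ℕ}
    {C : Fin (d + 1) → Set α} {x : α} (hx : x ∈ ⋃ i, C i) (h : ∀ i : Fin d, x ∉ C i.castSucc) :
    x ∈ C (Fin.last d) := by
  obtain ⟨j, hj⟩ := mem_iUnion.1 hx
  cases j using Fin.lastCases with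
  | last => exact hj
  | cast i => exact absurd hj (h i)

theorem continuous_toLp_infDist {α : Type*} [PseudoMetricSpace α] {d : ℕ}
    (C : Fin d → Set α) : Continuous fun x => (WithLp.toLp 2 fun i => infDist x (C i) : Euc d) :=
  (PiLp.continuous_toLp 2 _).comp (continuous_pi fun i => continuous_infDist_pt (C i))

theorem exists_orbit_mem_of_isClosed_cover {α : Type*} [PseudoMetricSpace α] {d : ℕ}
    {M : Set α} {A : α → α} (hAM : MapsTo A M M)
    (hBU : ∀ g : α → Euc d, ContinuousOn g M → ∃ x ∈ M, g (A x) = g x)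
    (C : Fin (d + 1) → Set α) (hclosed : ∀ i, IsClosed (C i)) (hcover : M ⊆ ⋃ i, C i) :
    ∃ i, ∃ x ∈ M, x ∈ C i ∧ A x ∈ C i := by
  obtain ⟨x, hxM, hgx⟩ := hBU _ (continuous_toLp_infDist fun i : Fin d => C i.castSucc).continuousOn
  have hmem : ∀ i : Fin d, A x ∈ C i.castSucc ↔ x ∈ C i.castSucc := fun i =>
    (hclosed _).mem_iff_mem_of_infDist_eq (congrArg (fun v : Euc d => v i) hgx)
  by_cases h : ∃ i : Fin d, x ∈ C i.castSucc
  · obtain ⟨i, hi⟩ := h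
    exact ⟨i.castSucc, x, hxM, hi, (hmem i).2 hi⟩
  · push Not at h
    exact ⟨Fin.last d, x, hxM, mem_last_of_mem_iUnion_of_forall_notMem_castSucc (hcover hxM) h,
      mem_last_of_mem_iUnion_of_forall_notMem_castSucc (hcover (hAM hxM))
        fun i hi => h i ((hmem i).1 hi)⟩

theorem lusternik_schnirelmann_BUT_general (d N : ℕ) (M : Set (Euc N)) (A : Euc N → Euc N)
    (hBUT : IsBUTManifold d M A)
    (C : Fin (d + 1) → Set (Euc N))
    (hclosed : ∀ i, IsClosed (C i))
    (hcover : M ⊆ ⋃ i, C i) :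
    ∃ i, ∃ x ∈ M, x ∈ C i ∧ A x ∈ C i :=
  exists_orbit_mem_of_isClosed_cover hBUT.2.1.1 hBUT.2.2 C hclosed hcover

/-- **Lusternik–Schnirelmann for BUT-manifolds.** A `d`-dimensional BUT-manifold
`(M, A)` cannot be covered by `d + 1` closed sets none of which contains a pair
`{x, A x}`: in any such closed cover some set contains an orbit. -/
theorem lusternik_schnirelmann_BUT (d N : ℕ) (M : Set (Euc N)) (A : Euc N → Euc N)
    (hBUT : IsBUTManifold d M A)
    (C : Fin (d + 1) → Set (Euc N))
    (hclosed : ∀ i, IsClosed (C i)) (hsub : ∀ i, C i ⊆ M)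
    (hcover : M ⊆ ⋃ i, C i) :
    ∃ i, ∃ x ∈ M, x ∈ C i ∧ A x ∈ C i :=
  lusternik_schnirelmann_BUT_general d N M A hBUT C hclosed hcover
end
end
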